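/- The elements τ and μ of the Brunner–Sidki–Vieira group G₂ each have infinite order, and for every n ∈ ℕ the cyclic group generated by τ (respectively by μ) acts transitively on the set Xⁿ of words of length n. -/

import Mathlib

namespace AutSG

variable {X Q : Type*}

/-- The action of a state `q` of a Mealy automaton with transition function `δ`
and output function `out` on finite words over the alphabet `X`. -/
def mAct (δ : Q → X → Q) (out : Q → X → X) : Q → List X → List X
  | _, [] => []
  | q, x :: w => out q x :: mAct δ out (δ q x) w

theorem mAct_bijective (δ : Q → X → Q) (out : Q → X → X)
    (hout : ∀ q, Function.Bijective (out q)) (q : Q) :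
    Function.Bijective (mAct δ out q) := by
  have key : ∀ (l₁ : List X) (q : Q) (l₂ : List X),
      mAct δ out q l₁ = mAct δ out q l₂ → l₁ = l₂ := by
    intro l₁
    induction l₁ with
    | nil =>
      intro q l₂ h
      cases l₂ with
      | nil => rfl
      | cons y u => exact absurd h (by simp [mAct])
    | cons x w ih =>
      intro q l₂ h
      cases l₂ with
      | nil => exact absurd h (by simp [mAct])
      | cons y u =>
        simp only [mAct, List.cons.injEq] at h
        obtain rfl : x = y := (hout q).1 h.1
        rw [ih (δ q x) u h.2]
  have key2 : ∀ (l : List X) (q : Q), ∃ m, mAct δ out q m = l := by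
    intro l
    induction l with
    | nil => exact fun q => ⟨[], rfl⟩
    | cons y u ih =>
      intro q
      obtain ⟨x, hx⟩ := (hout q).2 y
      obtain ⟨m, hm⟩ := ih (δ q x)
      exact ⟨x :: m, by simp [mAct, hx, hm]⟩
  exact ⟨fun {l₁ l₂} h => key l₁ q l₂ h, fun l => key2 l q⟩

/-- The permutation of `X*` induced by the state `q` of an invertible Mealy automaton,
as an element of `Equiv.Perm (List X)`.  We use the convention that permutations act
on the *right* via `rApp` below, so that the Lean group multiplication `g * h`
corresponds to "first `g`, then `h`", as in the usual convention for automaton groups. -/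
noncomputable def genPerm (δ : Q → X → Q) (out : Q → X → X)
    (hout : ∀ q, Function.Bijective (out q)) (q : Q) : Equiv.Perm (List X) :=
  (Equiv.ofBijective _ (mAct_bijective δ out hout q))⁻¹

/-- Right action of a permutation on words: `rApp g w` is `w^g`.
Note `rApp (g * h) w = rApp h (rApp g w)`. -/
def rApp (g : Equiv.Perm (List X)) (w : List X) : List X := g⁻¹ w

theorem rApp_genPerm (δ : Q → X → Q) (out : Q → X → X)
    (hout : ∀ q, Function.Bijective (out q)) (q : Q) (w : List X) :
    rApp (genPerm δ out hout q) w = mAct δ out q w := by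
  simp [rApp, genPerm, Equiv.ofBijective]

/-- Commutator with the convention `[x,y] = x⁻¹y⁻¹xy`. -/
def comm {G : Type*} [Group G] (x y : G) : G := x⁻¹ * y⁻¹ * x * y

/-- Conjugation with the convention `y^z = z⁻¹yz`. -/
def conj {G : Type*} [Group G] (y z : G) : G := z⁻¹ * y * z

/-- Iterated commutators: `E₀(g,h) = g`, `E_{c+1}(g,h) = [E_c(g,h), h]`. -/
def engel {G : Type*} [Group G] : ℕ → G → G → G
  | 0, g, _ => g
  | c + 1, g, h => comm (engel c g h) h

/-- `vStar v k` is the permutation `v*k` of `X*`: it maps `v ++ w` to `v ++ w^k`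
(with respect to the right action `rApp`) and fixes every word not having `v`
as a prefix. -/
def vStar [DecidableEq X] (v : List X) (k : Equiv.Perm (List X)) :
    Equiv.Perm (List X) where
  toFun w := if v <+: w then v ++ k (w.drop v.length) else w
  invFun w := if v <+: w then v ++ k.symm (w.drop v.length) else w
  left_inv w := by
    by_cases h : v <+: w
    · simp only [if_pos h, if_pos (List.prefix_append v _), List.drop_left,
        Equiv.symm_apply_apply]
      exact List.prefix_iff_eq_append.mp h
    · simp only [if_neg h]
  right_inv w := by
    by_cases h : v <+: w
    · simp only [if_pos h, if_pos (List.prefix_append v _), List.drop_left,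
        Equiv.apply_symm_apply]
      exact List.prefix_iff_eq_append.mp h
    · simp only [if_neg h]

end AutSG
namespace AutSG

/-- States of the Brunner–Sidki–Vieira automaton: `τ`, `μ`, `μ⁻¹` (written `mi`),
and the identity state `e`. -/
inductive BSVQ | t | m | mi | e
deriving DecidableEq

/-- Transition function (letters `1,2` are `0,1 : Fin 2`):
`(1w)^τ = 2w`, `(2w)^τ = 1(w^τ)`; `(1w)^μ = 2w`, `(2w)^μ = 1(w^{μ⁻¹})`;
and `μ⁻¹` satisfies `(1w)^{μ⁻¹} = 2(w^μ)`, `(2w)^{μ⁻¹} = 1w`. -/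
def bsvδ : BSVQ → Fin 2 → BSVQ
  | .t, 0 => .e
  | .t, _ => .t
  | .m, 0 => .e
  | .m, _ => .mi
  | .mi, 0 => .m
  | _, _ => .e

/-- Output function: all non-identity states swap the two letters. -/
def bsvOut : BSVQ → Fin 2 → Fin 2
  | .e, x => x
  | _, x => x + 1

theorem bsvOut_bij : ∀ q, Function.Bijective (bsvOut q) := by
  intro q; cases q <;> decide

/-- The generator `τ`: `(1w)^τ = 2w`, `(2w)^τ = 1(w^τ)`. -/
noncomputable def bsvτ : Equiv.Perm (List (Fin 2)) := genPerm bsvδ bsvOut bsvOut_bij .t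
/-- The generator `μ`: `(1w)^μ = 2w`, `(2w)^μ = 1(w^{μ⁻¹})`. -/
noncomputable def bsvμ : Equiv.Perm (List (Fin 2)) := genPerm bsvδ bsvOut bsvOut_bij .m

/-- The Brunner–Sidki–Vieira group `G₂ = ⟨τ, μ⟩`. -/
noncomputable def BSV : Subgroup (Equiv.Perm (List (Fin 2))) :=
  Subgroup.closure {bsvτ, bsvμ}

end AutSG


namespace AutSGAux
open AutSG

def T : List (Fin 2) → List (Fin 2) := mAct bsvδ bsvOut .t
def M : List (Fin 2) → List (Fin 2) := mAct bsvδ bsvOut .m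
def Mi : List (Fin 2) → List (Fin 2) := mAct bsvδ bsvOut .mi

lemma fin2cases (x : Fin 2) : x = 0 ∨ x = 1 := by
  match x with
  | 0 => exact Or.inl rfl
  | 1 => exact Or.inr rfl

lemma mAct_e : ∀ w : List (Fin 2), mAct bsvδ bsvOut .e w = w := by
  intro w
  induction w with
  | nil => rfl
  | cons x w ih =>
    show bsvOut .e x :: mAct bsvδ bsvOut (bsvδ .e x) w = _
    rw [show bsvδ BSVQ.e x = BSVQ.e by rfl, show bsvOut BSVQ.e x = x by rfl, ih]

lemma mAct_length {Q X : Type*} (δ : Q → X → Q) (out : Q → X → X) :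
    ∀ (w : List X) (q : Q), (mAct δ out q w).length = w.length := by
  intro w
  induction w with
  | nil => intro q; rfl
  | cons x w ih => intro q; simp [mAct, ih]

lemma T_cons0 (w : List (Fin 2)) : T (0 :: w) = 1 :: w := by
  show bsvOut .t 0 :: mAct bsvδ bsvOut (bsvδ .t 0) w = 1 :: w
  rw [show bsvδ BSVQ.t 0 = BSVQ.e by decide,
    show bsvOut BSVQ.t 0 = 1 by decide, mAct_e]

lemma T_cons1 (w : List (Fin 2)) : T (1 :: w) = 0 :: T w := by
  show bsvOut .t 1 :: mAct bsvδ bsvOut (bsvδ .t 1) w = 0 :: T w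
  rw [show bsvδ BSVQ.t 1 = BSVQ.t by decide,
    show bsvOut BSVQ.t 1 = 0 by decide]; rfl

lemma M_cons0 (w : List (Fin 2)) : M (0 :: w) = 1 :: w := by
  show bsvOut .m 0 :: mAct bsvδ bsvOut (bsvδ .m 0) w = 1 :: w
  rw [show bsvδ BSVQ.m 0 = BSVQ.e by decide,
    show bsvOut BSVQ.m 0 = 1 by decide, mAct_e]

lemma M_cons1 (w : List (Fin 2)) : M (1 :: w) = 0 :: Mi w := by
  show bsvOut .m 1 :: mAct bsvδ bsvOut (bsvδ .m 1) w = 0 :: Mi w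
  rw [show bsvδ BSVQ.m 1 = BSVQ.mi by decide,
    show bsvOut BSVQ.m 1 = 0 by decide]; rfl

lemma Mi_cons0 (w : List (Fin 2)) : Mi (0 :: w) = 1 :: M w := by
  show bsvOut .mi 0 :: mAct bsvδ bsvOut (bsvδ .mi 0) w = 1 :: M w
  rw [show bsvδ BSVQ.mi 0 = BSVQ.m by decide,
    show bsvOut BSVQ.mi 0 = 1 by decide]; rfl

lemma Mi_cons1 (w : List (Fin 2)) : Mi (1 :: w) = 0 :: w := by
  show bsvOut .mi 1 :: mAct bsvδ bsvOut (bsvδ .mi 1) w = 0 :: w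
  rw [show bsvδ BSVQ.mi 1 = BSVQ.e by decide,
    show bsvOut BSVQ.mi 1 = 0 by decide, mAct_e]

lemma T_iter (k : ℕ) (x : Fin 2) (w : List (Fin 2)) :
    T^[2 * k] (x :: w) = x :: T^[k] w := by
  induction k generalizing w with
  | zero => rfl
  | succ k ih =>
    have h2 : 2 * (k + 1) = 2 * k + 1 + 1 := by ring
    rw [h2, Function.iterate_succ_apply, Function.iterate_succ_apply]
    rcases fin2cases x with rfl | rfl
    · rw [T_cons0, T_cons1, ih, ← Function.iterate_succ_apply]
    · rw [T_cons1, T_cons0, ih, ← Function.iterate_succ_apply]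

lemma M_iter (k : ℕ) (x : Fin 2) (w : List (Fin 2)) :
    M^[2 * k] (x :: w) = x :: Mi^[k] w := by
  induction k generalizing w with
  | zero => rfl
  | succ k ih =>
    have h2 : 2 * (k + 1) = 2 * k + 1 + 1 := by ring
    rw [h2, Function.iterate_succ_apply, Function.iterate_succ_apply]
    rcases fin2cases x with rfl | rfl
    · rw [M_cons0, M_cons1, ih, ← Function.iterate_succ_apply]
    · rw [M_cons1, M_cons0, ih, ← Function.iterate_succ_apply]

lemma Mi_iter (k : ℕ) (x : Fin 2) (w : List (Fin 2)) :
    Mi^[2 * k] (x :: w) = x :: M^[k] w := by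
  induction k generalizing w with
  | zero => rfl
  | succ k ih =>
    have h2 : 2 * (k + 1) = 2 * k + 1 + 1 := by ring
    rw [h2, Function.iterate_succ_apply, Function.iterate_succ_apply]
    rcases fin2cases x with rfl | rfl
    · rw [Mi_cons0, Mi_cons1, ih, ← Function.iterate_succ_apply]
    · rw [Mi_cons1, Mi_cons0, ih, ← Function.iterate_succ_apply]

/-- Joint level transitivity for τ, μ, μ⁻¹. -/
lemma trans3 : ∀ (n : ℕ) (u w : List (Fin 2)), u.length = n → w.length = n →
    (∃ k : ℕ, T^[k] u = w) ∧ (∃ k : ℕ, M^[k] u = w) ∧ (∃ k : ℕ, Mi^[k] u = w) := by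
  intro n
  induction n with
  | zero =>
    intro u w hu hw
    rw [List.length_eq_zero_iff] at hu hw
    subst hu; subst hw
    exact ⟨⟨0, rfl⟩, ⟨0, rfl⟩, ⟨0, rfl⟩⟩
  | succ n ih =>
    intro u w hu hw
    obtain ⟨x, u', rfl⟩ : ∃ x u', u = x :: u' := by
      cases u with
      | nil => simp at hu
      | cons a b => exact ⟨a, b, rfl⟩
    obtain ⟨y, w', rfl⟩ : ∃ y w', w = y :: w' := by
      cases w with
      | nil => simp at hw
      | cons a b => exact ⟨a, b, rfl⟩
    simp only [List.length_cons, Nat.succ.injEq] at hu hw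
    refine ⟨?_, ?_, ?_⟩
    · -- τ
      rcases fin2cases x with rfl | rfl <;> rcases fin2cases y with rfl | rfl
      · obtain ⟨k, hk⟩ := (ih u' w' hu hw).1
        exact ⟨2 * k, by rw [T_iter, hk]⟩
      · obtain ⟨k, hk⟩ := (ih u' w' hu hw).1
        exact ⟨2 * k + 1, by rw [Function.iterate_succ_apply, T_cons0, T_iter, hk]⟩
      · obtain ⟨k, hk⟩ := (ih (T u') w'
          (by rw [show (T u').length = u'.length from mAct_length _ _ u' _]; exact hu) hw).1
        exact ⟨2 * k + 1, by rw [Function.iterate_succ_apply, T_cons1, T_iter, hk]⟩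
      · obtain ⟨k, hk⟩ := (ih u' w' hu hw).1
        exact ⟨2 * k, by rw [T_iter, hk]⟩
    · -- μ
      rcases fin2cases x with rfl | rfl <;> rcases fin2cases y with rfl | rfl
      · obtain ⟨k, hk⟩ := (ih u' w' hu hw).2.2
        exact ⟨2 * k, by rw [M_iter, hk]⟩
      · obtain ⟨k, hk⟩ := (ih u' w' hu hw).2.2
        exact ⟨2 * k + 1, by rw [Function.iterate_succ_apply, M_cons0, M_iter, hk]⟩
      · obtain ⟨k, hk⟩ := (ih (Mi u') w'
          (by rw [show (Mi u').length = u'.length from mAct_length _ _ u' _]; exact hu) hw).2.2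
        exact ⟨2 * k + 1, by rw [Function.iterate_succ_apply, M_cons1, M_iter, hk]⟩
      · obtain ⟨k, hk⟩ := (ih u' w' hu hw).2.2
        exact ⟨2 * k, by rw [M_iter, hk]⟩
    · -- μ⁻¹
      rcases fin2cases x with rfl | rfl <;> rcases fin2cases y with rfl | rfl
      · obtain ⟨k, hk⟩ := (ih u' w' hu hw).2.1
        exact ⟨2 * k, by rw [Mi_iter, hk]⟩
      · obtain ⟨k, hk⟩ := (ih (M u') w'
          (by rw [show (M u').length = u'.length from mAct_length _ _ u' _]; exact hu) hw).2.1
        exact ⟨2 * k + 1, by rw [Function.iterate_succ_apply, Mi_cons0, Mi_iter, hk]⟩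
      · obtain ⟨k, hk⟩ := (ih u' w' hu hw).2.1
        exact ⟨2 * k + 1, by rw [Function.iterate_succ_apply, Mi_cons1, Mi_iter, hk]⟩
      · obtain ⟨k, hk⟩ := (ih u' w' hu hw).2.1
        exact ⟨2 * k, by rw [Mi_iter, hk]⟩

lemma rApp_mul (g h : Equiv.Perm (List (Fin 2))) (w : List (Fin 2)) :
    rApp (g * h) w = rApp h (rApp g w) := by
  simp [rApp]

lemma rApp_pow (g : Equiv.Perm (List (Fin 2))) (f : List (Fin 2) → List (Fin 2))
    (hg : ∀ w, rApp g w = f w) (k : ℕ) (w : List (Fin 2)) :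
    rApp (g ^ k) w = f^[k] w := by
  induction k generalizing w with
  | zero => simp [rApp]
  | succ k ih =>
    rw [pow_succ, rApp_mul, ih, hg, Function.iterate_succ_apply']

lemma rApp_bsvτ (w : List (Fin 2)) : rApp bsvτ w = T w :=
  rApp_genPerm bsvδ bsvOut bsvOut_bij .t w

lemma rApp_bsvμ (w : List (Fin 2)) : rApp bsvμ w = M w :=
  rApp_genPerm bsvδ bsvOut bsvOut_bij .m w

lemma not_finOrder (g : Equiv.Perm (List (Fin 2))) (f : List (Fin 2) → List (Fin 2))
    (hg : ∀ w, rApp g w = f w)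
    (hlen : ∀ w : List (Fin 2), (f w).length = w.length)
    (htrans : ∀ (n : ℕ) (u w : List (Fin 2)), u.length = n → w.length = n →
      ∃ k : ℕ, f^[k] u = w) :
    ¬ IsOfFinOrder g := by
  intro h
  obtain ⟨N, hN, hpow⟩ := isOfFinOrder_iff_pow_eq_one.mp h
  have hfix : ∀ w : List (Fin 2), f^[N] w = w := by
    intro w
    rw [← rApp_pow g f hg, hpow]
    simp [rApp]
  have hflen : ∀ (k : ℕ) (w : List (Fin 2)), (f^[k] w).length = w.length := by
    intro k
    induction k with
    | zero => intro w; rfl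
    | succ k ih => intro w; rw [Function.iterate_succ_apply', hlen, ih]
  set z : List (Fin 2) := List.replicate N 0 with hz
  have hzlen : z.length = N := List.length_replicate
  let φ : Fin N → List.Vector (Fin 2) N :=
    fun k => ⟨f^[k.1] z, by rw [hflen, hzlen]⟩
  have hsurj : Function.Surjective φ := by
    rintro ⟨w, hw⟩
    obtain ⟨k, hk⟩ := htrans N z w hzlen hw
    refine ⟨⟨k % N, Nat.mod_lt _ hN⟩, Subtype.ext ?_⟩
    show f^[k % N] z = w
    have hk' : f^[k % N + N * (k / N)] z = w := by
      rw [Nat.mod_add_div k N]; exact hk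
    rw [Function.iterate_add_apply, Function.iterate_mul,
      Function.iterate_fixed (hfix z)] at hk'
    exact hk'
  have hcard : Fintype.card (List.Vector (Fin 2) N) ≤ Fintype.card (Fin N) :=
    Fintype.card_le_of_surjective φ hsurj
  rw [card_vector, Fintype.card_fin, Fintype.card_fin] at hcard
  exact absurd hcard (by simpa using (Nat.lt_two_pow_self (n := N)))

end AutSGAux

open AutSG AutSGAux in
theorem bsv_infinite_order_and_transitive_AUX :
    ¬ IsOfFinOrder bsvτ ∧ ¬ IsOfFinOrder bsvμ ∧
    ∀ n : ℕ, ∀ u w : List (Fin 2), u.length = n → w.length = n →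
      (∃ k : ℤ, rApp (bsvτ ^ k) u = w) ∧ (∃ k : ℤ, rApp (bsvμ ^ k) u = w) := by
  refine ⟨?_, ?_, ?_⟩
  · exact not_finOrder bsvτ T rApp_bsvτ (fun w => mAct_length _ _ w _)
      (fun n u w hu hw => (trans3 n u w hu hw).1)
  · exact not_finOrder bsvμ M rApp_bsvμ (fun w => mAct_length _ _ w _)
      (fun n u w hu hw => (trans3 n u w hu hw).2.1)
  · intro n u w hu hw
    obtain ⟨⟨k₁, hk₁⟩, ⟨k₂, hk₂⟩, -⟩ := trans3 n u w hu hw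
    constructor
    · exact ⟨(k₁ : ℤ), by rw [zpow_natCast, rApp_pow bsvτ T rApp_bsvτ, hk₁]⟩
    · exact ⟨(k₂ : ℤ), by rw [zpow_natCast, rApp_pow bsvμ M rApp_bsvμ, hk₂]⟩


open AutSG in
/-- The elements `τ` and `μ` of the Brunner–Sidki–Vieira group `G₂` have
infinite order, and for every `n` the cyclic subgroups `⟨τ⟩` and `⟨μ⟩` act
transitively on the set `Xⁿ` of words of length `n`. -/
theorem bsv_infinite_order_and_transitive :
    ¬ IsOfFinOrder bsvτ ∧ ¬ IsOfFinOrder bsvμ ∧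
    ∀ n : ℕ, ∀ u w : List (Fin 2), u.length = n → w.length = n →
      (∃ k : ℤ, rApp (bsvτ ^ k) u = w) ∧ (∃ k : ℤ, rApp (bsvμ ^ k) u = w) := by
  exact bsv_infinite_order_and_transitive_AUX
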